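/- arXiv:2201.02763 — 2 statements merged into one kernel-verified Lean document; each statement's English description precedes it below -/
import Mathlib

section
/- Let A be a commutative group and (B_γ)_{γ∈Γ} a nonempty family of commutative groups with product B = ∏_γ B_γ and projections π_γ. For every f: A → B, fdeg(f) = sup_{γ∈Γ} fdeg(π_γ ∘ f). -/
open Classical in
/-- Difference operator: `(Δ_a f)(x) = f (x + a) - f x`. -/
def fdiff {A B : Type*} [AddCommGroup A] [AddCommGroup B] (a : A) (f : A → B) : A → B :=
  fun x => f (x + a) - f x

/-- `DegLE f n` means every `(n+1)`-fold difference of `f` vanishes, i.e. `fdeg f ≤ n`. -/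
def DegLE {A B : Type*} [AddCommGroup A] [AddCommGroup B] (f : A → B) (n : ℕ) : Prop :=
  ∀ l : List A, l.length = n + 1 → l.foldr fdiff f = 0

open Classical in
/-- The functional degree of `f : A → B`, valued in `ℕ ∪ {-∞, ∞}`:
`fdeg 0 = ⊥ (= -∞)`; for nonzero `f`, it is the least `n` with all `(n+1)`-fold
differences of `f` vanishing, or `⊤ (= ∞)` if there is no such `n`. -/
noncomputable def fdeg {A B : Type*} [AddCommGroup A] [AddCommGroup B] (f : A → B) :
    WithBot ℕ∞ :=
  if f = 0 then ⊥
  else if ∃ n : ℕ, DegLE f n then (((sInf {n : ℕ | DegLE f n} : ℕ) : ℕ∞) : WithBot ℕ∞)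
  else ((⊤ : ℕ∞) : WithBot ℕ∞)

section Aux
variable {A B : Type*} [AddCommGroup A] [AddCommGroup B]

lemma fdiff_zero' (a : A) : fdiff a (0 : A → B) = 0 := by
  funext x; simp [fdiff]

lemma foldr_fdiff_zero (l : List A) : l.foldr fdiff (0 : A → B) = 0 := by
  induction l with
  | nil => rfl
  | cons a l ih => simp [List.foldr, ih, fdiff_zero']

lemma DegLE_zero (n : ℕ) : DegLE (0 : A → B) n := fun l _ => foldr_fdiff_zero l

lemma fdeg_zero : fdeg (0 : A → B) = ⊥ := if_pos rfl

lemma DegLE.succ' {f : A → B} {n : ℕ} (h : DegLE f n) : DegLE f (n + 1) := by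
  intro l hl
  cases l with
  | nil => simp at hl
  | cons a l =>
    have h0 : l.foldr fdiff f = 0 := h l (by simpa using hl)
    simp [List.foldr, h0, fdiff_zero']

lemma DegLE.mono' {f : A → B} {n m : ℕ} (h : DegLE f n) (hnm : n ≤ m) : DegLE f m := by
  induction m, hnm using Nat.le_induction with
  | base => exact h
  | succ m _ ih => exact ih.succ'

lemma fdeg_le {f : A → B} {n : ℕ} (h : DegLE f n) : fdeg f ≤ ((n : ℕ∞) : WithBot ℕ∞) := by
  by_cases hf : f = 0
  · simp [hf, fdeg_zero]
  · have hex : ∃ n : ℕ, DegLE f n := ⟨n, h⟩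
    rw [fdeg, if_neg hf, if_pos hex]
    exact_mod_cast Nat.sInf_le (show n ∈ {k | DegLE f k} from h)

lemma le_fdeg {f : A → B} {n : ℕ} (h : ¬ DegLE f n) : ((n : ℕ∞) : WithBot ℕ∞) ≤ fdeg f := by
  have hf : f ≠ 0 := fun h0 => h (h0 ▸ DegLE_zero n)
  rw [fdeg, if_neg hf]
  split_ifs with hd
  · obtain ⟨k, hk⟩ := hd
    have hne : {k | DegLE f k}.Nonempty := ⟨k, hk⟩
    have hmem : DegLE f (sInf {k | DegLE f k}) := Nat.sInf_mem hne
    have hle : n ≤ sInf {k | DegLE f k} := by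
      by_contra hlt
      push_neg at hlt
      exact h (DegLE.mono' hmem (by omega))
    exact_mod_cast hle
  · exact_mod_cast le_top

lemma fdeg_eq_coe {f : A → B} {n : ℕ} (hf : f ≠ 0) (h : DegLE f n)
    (h' : ∀ k, DegLE f k → n ≤ k) : fdeg f = ((n : ℕ∞) : WithBot ℕ∞) := by
  have hex : ∃ n : ℕ, DegLE f n := ⟨n, h⟩
  have hne : {k | DegLE f k}.Nonempty := ⟨n, h⟩
  rw [fdeg, if_neg hf, if_pos hex]
  have heq : sInf {k | DegLE f k} = n :=
    le_antisymm (Nat.sInf_le (show n ∈ {k | DegLE f k} from h)) (h' _ (Nat.sInf_mem hne))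
  rw [heq]

lemma withbot_eq_top {x : WithBot ℕ∞} (h : ∀ n : ℕ, ((n : ℕ∞) : WithBot ℕ∞) ≤ x) :
    x = ((⊤ : ℕ∞) : WithBot ℕ∞) := by
  induction x using WithBot.recBotCoe with
  | bot => exact absurd (h 0) (by simp)
  | coe y =>
    induction y using ENat.recTopCoe with
    | top => rfl
    | coe m =>
      have := h (m + 1)
      rw [WithBot.coe_le_coe] at this
      exact absurd (by exact_mod_cast this) (by omega)

end Aux

section Pi
variable {A : Type*} [AddCommGroup A] {Γ : Type*} {B : Γ → Type*} [∀ γ, AddCommGroup (B γ)]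

lemma foldr_fdiff_apply (l : List A) (f : A → ∀ γ, B γ) (γ : Γ) :
    (fun x => (l.foldr fdiff f) x γ) = l.foldr fdiff (fun x => f x γ) := by
  induction l with
  | nil => rfl
  | cons a l ih => funext x; simp [List.foldr, fdiff, ← ih]

lemma DegLE_pi_iff (f : A → ∀ γ, B γ) (n : ℕ) :
    DegLE f n ↔ ∀ γ, DegLE (fun x => f x γ) n := by
  constructor
  · intro h γ l hl
    rw [← foldr_fdiff_apply, h l hl]
    rfl
  · intro h l hl
    funext x γ
    have h1 := congrFun (h γ l hl) x
    rw [← foldr_fdiff_apply] at h1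
    exact h1

end Pi


/-- For `f : A → ∏ γ, B γ`, the functional degree of `f` is the supremum of the
functional degrees of its components. -/
theorem fdeg_pi {A : Type*} [AddCommGroup A] {Γ : Type*} [Nonempty Γ]
    (B : Γ → Type*) [∀ γ, AddCommGroup (B γ)] (f : A → ∀ γ, B γ) :
    fdeg f = ⨆ γ : Γ, fdeg (fun x => f x γ) := by
  by_cases hf : f = 0
  · subst hf
    have h1 : ∀ γ, (fun x => (0 : A → ∀ γ, B γ) x γ) = (0 : A → B γ) := fun γ => rfl
    simp only [h1, fdeg_zero, iSup_bot]
  · -- some component is nonzero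
    obtain ⟨γ₀, hγ₀⟩ : ∃ γ, (fun x => f x γ) ≠ 0 := by
      by_contra h
      push_neg at h
      exact hf (funext fun x => funext fun γ => congrFun (h γ) x)
    by_cases hd : ∃ n : ℕ, DegLE f n
    · obtain ⟨n, hn⟩ := hd
      have hex : ∃ n : ℕ, DegLE f n := ⟨n, hn⟩
      have hnem : {k | DegLE f k}.Nonempty := ⟨n, hn⟩
      set N := sInf {k | DegLE f k} with hNdef
      have hNmem : DegLE f N := Nat.sInf_mem hnem
      have hfdeg : fdeg f = ((N : ℕ∞) : WithBot ℕ∞) := by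
        rw [fdeg, if_neg hf, if_pos hex]
      rw [hfdeg]
      apply le_antisymm
      · -- find a witness component with fdeg = N
        rcases Nat.eq_zero_or_pos N with hN0 | hNpos
        · apply le_iSup_of_le γ₀
          rw [hN0]
          have : DegLE (fun x => f x γ₀) 0 := ((DegLE_pi_iff f 0).1 (hN0 ▸ hNmem)) γ₀
          rw [fdeg_eq_coe hγ₀ this (fun k _ => Nat.zero_le k)]
        · obtain ⟨m, hm⟩ : ∃ m, N = m + 1 := ⟨N - 1, by omega⟩
          have hnot : ¬ DegLE f m := fun h => by
            have := Nat.sInf_le (show m ∈ {k | DegLE f k} from h)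
            omega
          obtain ⟨γ₁, hγ₁⟩ : ∃ γ, ¬ DegLE (fun x => f x γ) m := by
            by_contra h
            push_neg at h
            exact hnot ((DegLE_pi_iff f m).2 h)
          have hne : (fun x => f x γ₁) ≠ 0 := fun h0 => hγ₁ (h0 ▸ DegLE_zero m)
          have hdeg : DegLE (fun x => f x γ₁) N := ((DegLE_pi_iff f N).1 hNmem) γ₁
          have heq : fdeg (fun x => f x γ₁) = ((N : ℕ∞) : WithBot ℕ∞) := by
            refine fdeg_eq_coe hne hdeg (fun k hk => ?_)
            by_contra hlt
            push_neg at hlt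
            exact hγ₁ (hk.mono' (by omega))
          apply le_iSup_of_le γ₁
          exact le_of_eq heq.symm
      · refine iSup_le fun γ => ?_
        exact fdeg_le (((DegLE_pi_iff f N).1 hNmem) γ)
    · have hfdeg : fdeg f = ((⊤ : ℕ∞) : WithBot ℕ∞) := by
        rw [fdeg, if_neg hf, if_neg hd]
      rw [hfdeg]
      apply le_antisymm
      · refine le_of_eq (withbot_eq_top fun n => ?_).symm
        push_neg at hd
        obtain ⟨γ₁, hγ₁⟩ : ∃ γ, ¬ DegLE (fun x => f x γ) n := by
          by_contra h
          push_neg at h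
          exact hd n ((DegLE_pi_iff f n).2 h)
        exact le_iSup_of_le γ₁ (le_fdeg hγ₁)
      · refine iSup_le fun γ => ?_
        exact_mod_cast le_top
end

section
/- Let R be a nonzero commutative ring and A a nontrivial finite commutative group. Then the nilpotency index of the augmentation ideal of R[A] is at least max(exp(A), rank(A)), where rank(A) is the least number of cyclic groups whose direct sum is isomorphic to A. In particular, if a ∈ A has order n then ([a]−[0])^{n−1} ≠ 0 in R[A]. -/
/-- The augmentation map of the group ring `R[A]`. -/
noncomputable def aug (R : Type*) [CommRing R] (A : Type*) [AddCommGroup A] :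
    AddMonoidAlgebra R A →ₐ[R] R :=
  (AddMonoidAlgebra.lift R R A) 1

/-- The augmentation ideal of `R[A]`. -/
noncomputable def augIdeal (R : Type*) [CommRing R] (A : Type*) [AddCommGroup A] :
    Ideal (AddMonoidAlgebra R A) :=
  RingHom.ker (aug R A).toRingHom

/-- The rank of a commutative group: the least `r` such that `A` is isomorphic to a
direct sum of `r` cyclic groups. -/
noncomputable def addRank (A : Type*) [AddCommGroup A] : ℕ :=
  sInf {r : ℕ | ∃ n : Fin r → ℕ, Nonempty (A ≃+ ∀ i, ZMod (n i))}

/-! If no nonempty subfamily of `a₁, …, a_k ∈ A` sums to zero, then in the expansion of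
`∏ ([aᵢ] - [0])` only the empty subfamily contributes to the coefficient at `0`, so the
product is a nonzero element of `I ^ k` and hence `k` is less than the nilpotency index.
Both `ord a - 1` copies of `a` and the generators of a decomposition of `A` into nontrivial
cyclic groups are such families. -/

open AddMonoidAlgebra
open scoped DirectSum

def IsZeroSumFree {ι M : Type*} [AddCommMonoid M] (a : ι → M) : Prop :=
  ∀ t : Finset ι, t.Nonempty → ∑ i ∈ t, a i ≠ 0

lemma IsZeroSumFree.comp_addEquiv {ι M N : Type*} [AddCommMonoid M] [AddCommMonoid N]
    {a : ι → M} (ha : IsZeroSumFree a) (e : M ≃+ N) : IsZeroSumFree (e ∘ a) := fun t ht h =>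
  ha t ht (e.injective (by simpa [map_sum] using h))

lemma isZeroSumFree_const_addOrderOf_sub_one {M : Type*} [AddCommMonoid M] (a : M) :
    IsZeroSumFree (fun _ : Fin (addOrderOf a - 1) => a) := by
  intro t ht h
  rw [Finset.sum_const] at h
  have hdvd : addOrderOf a ∣ t.card := addOrderOf_dvd_of_nsmul_eq_zero h
  have hle : t.card ≤ addOrderOf a - 1 := by simpa using t.card_le_univ
  have hpos := Finset.card_pos.mpr ht
  have := Nat.le_of_dvd hpos hdvd
  omega

lemma isZeroSumFree_directSum_of_one {ι : Type*} [DecidableEq ι] (n : ι → ℕ)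
    (hn : ∀ i, 1 < n i) :
    IsZeroSumFree (fun i => DirectSum.of (fun i => ZMod (n i)) i 1) := by
  rintro t ⟨j, hj⟩ h
  have := ZMod.nontrivial_iff.mpr (hn j).ne'
  have hcoord := congrArg (· j) h
  simp only [DirectSum.sum_apply, DirectSum.zero_apply] at hcoord
  rw [Finset.sum_eq_single_of_mem j hj fun i _ hij => DirectSum.of_eq_of_ne i j 1 hij.symm,
    DirectSum.of_eq_same] at hcoord
  exact one_ne_zero hcoord

lemma addRank_le_card {A ι : Type*} [AddCommGroup A] [Fintype ι] (n : ι → ℕ)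
    (e : A ≃+ ⨁ i, ZMod (n i)) : addRank A ≤ Fintype.card ι := by
  let σ := Fintype.equivFin ι
  exact Nat.sInf_le ⟨fun k => n (σ.symm k), ⟨e.trans <| (DirectSum.addEquivProd _).trans
    (RingEquiv.piCongrLeft' (fun i => ZMod (n i)) σ).toAddEquiv⟩⟩

lemma Ideal.card_lt_of_pow_eq_bot {S ι : Type*} [CommSemiring S] [Fintype ι] {I : Ideal S}
    {n : ℕ} (hI : I ^ n = ⊥) {x : ι → S} (hx : ∀ i, x i ∈ I) (hprod : ∏ i, x i ≠ 0) :
    Fintype.card ι < n := by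
  by_contra! hle
  have hmem : ∏ i, x i ∈ I ^ Fintype.card ι := by
    simpa using Ideal.prod_mem_prod (s := Finset.univ) (I := fun _ => I) fun i _ => hx i
  exact hprod (Ideal.mem_bot.mp (hI ▸ Ideal.pow_le_pow_right hle hmem))

section GroupRing

variable {R A : Type*} [CommRing R] [AddCommGroup A]

lemma single_sub_one_mem_augIdeal (a : A) : single a (1 : R) - 1 ∈ augIdeal R A := by
  simp [augIdeal, aug, one_def]

lemma coeff_zero_prod_single_sub_one {ι : Type*} [Fintype ι] {a : ι → A}
    (ha : IsZeroSumFree a) :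
    (∏ i, (single (a i) (1 : R) - 1)).coeff 0 = (-1) ^ Fintype.card ι := by
  classical
  have hexpand : ∏ i, (single (a i) (1 : R) - 1)
      = ∑ t ∈ Finset.univ.powerset,
          single (∑ i ∈ t, a i) ((-1 : R) ^ (Finset.univ \ t).card) := by
    simp only [sub_eq_add_neg, Finset.prod_add, Finset.prod_const, prod_single, one_pow]
    refine Finset.sum_congr rfl fun t _ => ?_
    rw [one_def, ← single_neg, single_pow, smul_zero, single_mul_single, add_zero, one_mul]
  rw [hexpand, coeff_sum, Finset.sum_apply',
    Finset.sum_eq_single_of_mem ∅ (Finset.empty_mem_powerset _)]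
  · simp [coeff_single]
  · intro t _ ht
    rw [coeff_single, Finsupp.single_eq_of_ne' (ha t (Finset.nonempty_iff_ne_empty.mpr ht))]

lemma prod_single_sub_one_ne_zero [Nontrivial R] {ι : Type*} [Fintype ι] {a : ι → A}
    (ha : IsZeroSumFree a) : ∏ i, (single (a i) (1 : R) - 1) ≠ 0 := fun h =>
  (isUnit_one.neg.pow _).ne_zero <| by
    simpa [h] using (coeff_zero_prod_single_sub_one (R := R) ha).symm

lemma card_lt_of_augIdeal_pow_eq_bot [Nontrivial R] {n : ℕ} (hn : augIdeal R A ^ n = ⊥)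
    {ι : Type*} [Fintype ι] {a : ι → A} (ha : IsZeroSumFree a) : Fintype.card ι < n :=
  Ideal.card_lt_of_pow_eq_bot hn (fun i => single_sub_one_mem_augIdeal (a i))
    (prod_single_sub_one_ne_zero ha)

end GroupRing

theorem augIdeal_nilpotency_index_lower_bound_general (R : Type*) [CommRing R] [Nontrivial R]
    (A : Type*) [AddCommGroup A] [Fintype A] :
    (∀ n : ℕ, augIdeal R A ^ n = ⊥ → max (AddMonoid.exponent A) (addRank A) ≤ n) ∧
      ∀ a : A, (AddMonoidAlgebra.single a (1 : R)
          - AddMonoidAlgebra.single (0 : A) (1 : R)) ^ (addOrderOf a - 1) ≠ 0 := by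
  classical
  refine ⟨fun n hn => max_le ?_ ?_, fun a => ?_⟩
  · obtain ⟨a, ha⟩ :=
      AddMonoid.exists_addOrderOf_eq_exponent (AddMonoid.ExponentExists.of_finite (G := A))
    have hlt := card_lt_of_augIdeal_pow_eq_bot hn (isZeroSumFree_const_addOrderOf_sub_one a)
    rw [Fintype.card_fin, ha] at hlt
    omega
  · obtain ⟨ι, _, m, hm, ⟨e⟩⟩ := AddCommGroup.equiv_directSum_zmod_of_finite' A
    have hlt := card_lt_of_augIdeal_pow_eq_bot hn
      ((isZeroSumFree_directSum_of_one m hm).comp_addEquiv e.symm)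
    have hle := addRank_le_card m e
    omega
  · simpa [← one_def] using
      prod_single_sub_one_ne_zero (R := R) (isZeroSumFree_const_addOrderOf_sub_one a)

/-- For a nonzero commutative ring `R` and a nontrivial finite commutative group `A`, the
nilpotency index of the augmentation ideal of `R[A]` is at least
`max (exp A) (rank A)`; in particular `([a]-[0])^(ord(a)-1) ≠ 0`. -/
theorem augIdeal_nilpotency_index_lower_bound (R : Type*) [CommRing R] [Nontrivial R]
    (A : Type*) [AddCommGroup A] [Fintype A] [Nontrivial A] :
    (∀ n : ℕ, augIdeal R A ^ n = ⊥ → max (AddMonoid.exponent A) (addRank A) ≤ n) ∧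
      ∀ a : A, (AddMonoidAlgebra.single a (1 : R)
          - AddMonoidAlgebra.single (0 : A) (1 : R)) ^ (addOrderOf a - 1) ≠ 0 :=
  augIdeal_nilpotency_index_lower_bound_general R A
end
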